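/- arXiv:math/0107056 — 5 statements merged into one kernel-verified Lean document; each statement's English description precedes it below -/
import Mathlib

section
/- For every 0 < q < 1, the sum Σ_π q^{|π|} over all plane partitions π converges and equals MacMahon's product: Σ_π q^{|π|} = ∏_{n=1}^{∞} (1 − q^n)^{−n}. -/
/-- A plane partition: a function `ℕ → ℕ → ℕ` (0-indexed), weakly decreasing in each
argument, with finite support (equivalently, finite total sum). -/
structure PlanePartition where
  toFun : ℕ → ℕ → ℕ
  anti_left : ∀ i j, toFun (i + 1) j ≤ toFun i j
  anti_right : ∀ i j, toFun i (j + 1) ≤ toFun i j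
  finite_support : {p : ℕ × ℕ | toFun p.1 p.2 ≠ 0}.Finite

/-- The volume `|π| = Σ_{i,j} π(i,j)` of a plane partition. -/
noncomputable def PlanePartition.vol (π : PlanePartition) : ℕ :=
  π.finite_support.toFinset.sum fun p => π.toFun p.1 p.2

/-!
Removing a hook. If `π ≠ 0`, let `a` be the last row with `π a 0 ≠ 0`. Start at `(a, 0)`, walk
right along row `a` while the entry stays equal to `π a 0`, step up to row `a - 1`, walk right
while the entry stays equal to the one entered there, and so on, until leaving row `0` at some
column `b`. Subtracting `1` along this path of `a + b + 1` cells leaves a plane partition, and the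
path is recovered from the result and `(a, b)` by walking from `(0, b)` down and to the left along
the runs of equal entries. The hooks `(a, b)` removed one after the other weakly decrease in the
order comparing `a` first and then `b` reversed, so iterating gives a bijection between plane
partitions and finitely supported `f : ℕ × ℕ →₀ ℕ` with `|π| = ∑ f (a, b) * (a + b + 1)`.
Hence `∑ q ^ |π| = ∏_{(a, b)} (1 - q ^ (a + b + 1))⁻¹`, and the `n + 1` factors with
`a + b = n` give MacMahon's product.
-/

open Finset

section AntitoneSequence

variable {r : ℕ → ℕ} {v s j : ℕ}

noncomputable def firstIndexLE (r : ℕ → ℕ) (v : ℕ) : ℕ := sInf {j | r j ≤ v}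

noncomputable def lastIndexGE (r : ℕ → ℕ) (v : ℕ) : ℕ := sInf {j | r (j + 1) < v}

theorem firstIndexLE_le_iff (hr : Antitone r) (hv : ∃ j, r j ≤ v) :
    firstIndexLE r v ≤ j ↔ r j ≤ v :=
  ⟨fun h => (hr h).trans (Nat.sInf_mem hv), fun h => Nat.sInf_le h⟩

theorem firstIndexLE_eq (h : ∀ j, s ≤ j ↔ r j ≤ v) : firstIndexLE r v = s :=
  le_antisymm (Nat.sInf_le ((h s).1 le_rfl))
    (le_csInf ⟨s, (h s).1 le_rfl⟩ fun _ hj => (h _).2 hj)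

theorem le_lastIndexGE_iff (hr : Antitone r) (hv : ∃ j, r j < v) (h0 : v ≤ r 0) :
    j ≤ lastIndexGE r v ↔ v ≤ r j := by
  have pred_mem {k : ℕ} (hk : r k < v) : k - 1 ∈ {j | r (j + 1) < v} := by
    obtain ⟨k, rfl⟩ : ∃ k', k = k' + 1 := Nat.exists_eq_add_one.2
      (Nat.pos_of_ne_zero fun hk0 => by subst hk0; omega)
    simpa using hk
  obtain ⟨k, hk⟩ := hv
  refine ⟨fun hj => ?_, fun hj => le_csInf ⟨_, pred_mem hk⟩ fun m hm => ?_⟩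
  · by_contra hlt
    have hj0 : j ≠ 0 := by rintro rfl; exact hlt h0
    have := Nat.sInf_le (pred_mem (not_le.1 hlt))
    unfold lastIndexGE at hj
    omega
  · by_contra hlt
    have := hr (show m + 1 ≤ j by omega)
    exact (not_lt.2 (hj.trans this)) hm

theorem lastIndexGE_eq (h : ∀ j, j ≤ s ↔ v ≤ r j) : lastIndexGE r v = s := by
  have hs : r (s + 1) < v := not_le.1 fun h' => by have := (h (s + 1)).2 h'; omega
  refine le_antisymm (Nat.sInf_le hs) (le_csInf ⟨s, hs⟩ fun m hm => ?_)
  by_contra hlt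
  exact (not_lt.2 ((h (m + 1)).1 (by omega))) hm

end AntitoneSequence

section Path

variable {c c' : ℕ → ℕ} {a i j : ℕ}

def pathCells (c : ℕ → ℕ) (a : ℕ) : Finset (ℕ × ℕ) :=
  (range (a + 1)).biUnion fun i => {i} ×ˢ Icc (c (i + 1)) (c i)

theorem mem_pathCells : (i, j) ∈ pathCells c a ↔ i ≤ a ∧ c (i + 1) ≤ j ∧ j ≤ c i := by
  simp [pathCells]

theorem pathCells_congr (h : ∀ i ≤ a + 1, c i = c' i) : pathCells c a = pathCells c' a :=
  biUnion_congr rfl fun i hi => by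
    rw [h i (by simp at hi; omega), h (i + 1) (by simp at hi; omega)]

theorem card_pathCells (hc : ∀ i ≤ a, c (i + 1) ≤ c i) :
    #(pathCells c a) + c (a + 1) = c 0 + a + 1 := by
  rw [pathCells, card_biUnion]
  · simp only [card_product, card_singleton, Nat.card_Icc, one_mul]
    induction a with
    | zero =>
      have := hc 0 le_rfl
      simp only [zero_add, sum_range_one] at this ⊢
      omega
    | succ n ih =>
      rw [sum_range_succ]
      have := ih fun i hi => hc i (by omega)
      have := hc (n + 1) le_rfl
      omega
  · intro i _ i' _ hii'
    simp only [Function.onFun, disjoint_left, mem_product, mem_singleton]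
    omega

end Path

namespace PlanePartition

variable {π π' : PlanePartition} {i j : ℕ} {h : ℕ × ℕ}

@[ext]
theorem ext (hf : ∀ i j, π.toFun i j = π'.toFun i j) : π = π' := by
  obtain ⟨f, _, _, _⟩ := π
  obtain ⟨f', _, _, _⟩ := π'
  obtain rfl : f = f' := funext₂ hf
  rfl

instance : Zero PlanePartition :=
  ⟨⟨fun _ _ => 0, fun _ _ => le_rfl, fun _ _ => le_rfl, by simp⟩⟩

@[simp]
theorem zero_toFun (i j : ℕ) : (0 : PlanePartition).toFun i j = 0 := rfl

theorem antitone_row (π : PlanePartition) (i : ℕ) : Antitone (π.toFun i) :=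
  antitone_nat_of_succ_le (π.anti_right i)

theorem antitone_col (π : PlanePartition) (j : ℕ) : Antitone (π.toFun · j) :=
  antitone_nat_of_succ_le (π.anti_left · j)

theorem toFun_le_toFun {i' j' : ℕ} (hi : i ≤ i') (hj : j ≤ j') :
    π.toFun i' j' ≤ π.toFun i j :=
  (π.antitone_row i' hj).trans (π.antitone_col j hi)

theorem eq_zero_iff : π = 0 ↔ π.toFun 0 0 = 0 :=
  ⟨fun h => h ▸ rfl, fun h => ext fun i j => Nat.eq_zero_of_le_zero <|
    h ▸ toFun_le_toFun (Nat.zero_le i) (Nat.zero_le j)⟩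

theorem exists_bound (π : PlanePartition) : ∃ N, ∀ i j, π.toFun i j ≠ 0 → i < N ∧ j < N := by
  obtain ⟨⟨I, J⟩, hIJ⟩ := π.finite_support.bddAbove
  refine ⟨max I J + 1, fun i j hij => ?_⟩
  obtain ⟨hi, hj⟩ := Prod.mk_le_mk.1
    (hIJ (show (i, j) ∈ {p : ℕ × ℕ | π.toFun p.1 p.2 ≠ 0} from hij))
  omega

theorem exists_row_eq_zero (π : PlanePartition) (i : ℕ) : ∃ j, π.toFun i j = 0 := by
  obtain ⟨N, hN⟩ := π.exists_bound
  exact ⟨N, by_contra fun h => (hN i N h).2.false⟩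

theorem exists_col_eq_zero (π : PlanePartition) : ∃ i, π.toFun i 0 = 0 := by
  obtain ⟨N, hN⟩ := π.exists_bound
  exact ⟨N, by_contra fun h => (hN N 0 h).1.false⟩

theorem vol_eq_sum_of_subset {F : Finset (ℕ × ℕ)}
    (hF : ∀ i j, π.toFun i j ≠ 0 → (i, j) ∈ F) : π.vol = ∑ p ∈ F, π.toFun p.1 p.2 :=
  sum_subset (fun p hp => hF p.1 p.2 (by simpa using hp)) fun p _ hp => by simpa using hp

@[simp]
theorem vol_zero : (0 : PlanePartition).vol = 0 :=
  (vol_eq_sum_of_subset (F := ∅) fun _ _ h => absurd rfl h).trans sum_empty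

theorem vol_eq_vol_add_card {P : Finset (ℕ × ℕ)}
    (hadd : ∀ i j, π'.toFun i j = π.toFun i j + if (i, j) ∈ P then 1 else 0) :
    π'.vol = π.vol + #P := by
  set F := π.finite_support.toFinset ∪ P
  have hπ : ∀ i j, π.toFun i j ≠ 0 → (i, j) ∈ F := fun i j hij =>
    mem_union_left _ (by simpa using hij)
  have hπ' : ∀ i j, π'.toFun i j ≠ 0 → (i, j) ∈ F := fun i j hij => by
    by_cases hP : (i, j) ∈ P
    · exact mem_union_right _ hP
    · exact hπ i j (by simpa [hadd, hP] using hij)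
  rw [vol_eq_sum_of_subset hπ', vol_eq_sum_of_subset hπ]
  simp only [hadd, sum_add_distrib]
  rw [← card_filter, filter_mem_eq_inter, inter_eq_right.2 subset_union_right]

def hookLength (h : ℕ × ℕ) : ℕ := h.1 + h.2 + 1

/-- Hooks are removed from a plane partition in decreasing order of this key. -/
def hookKey (h : ℕ × ℕ) : ℕ ×ₗ ℕᵒᵈ := toLex (h.1, OrderDual.toDual h.2)

theorem hookKey_le_hookKey_iff {h' : ℕ × ℕ} :
    hookKey h ≤ hookKey h' ↔ h.1 < h'.1 ∨ h.1 = h'.1 ∧ h'.2 ≤ h.2 :=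
  Prod.Lex.toLex_le_toLex

theorem hookKey_injective : Function.Injective hookKey := fun _ _ h => by
  simpa [hookKey, Prod.ext_iff] using h

noncomputable def hookRow (π : PlanePartition) : ℕ := lastIndexGE (π.toFun · 0) 1

theorem le_hookRow_iff (hπ : π ≠ 0) : i ≤ π.hookRow ↔ π.toFun i 0 ≠ 0 := by
  obtain ⟨k, hk⟩ := π.exists_col_eq_zero
  rw [hookRow, le_lastIndexGE_iff (π.antitone_col 0) ⟨k, by simp [hk]⟩
    (Nat.one_le_iff_ne_zero.2 (mt eq_zero_iff.2 hπ)), Nat.one_le_iff_ne_zero]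

/-- The removal path runs along row `i ≤ hookRow` from column `removalCol (i + 1)` to column
`removalCol i`. -/
noncomputable def removalCol (π : PlanePartition) (i : ℕ) : ℕ :=
  if i ≤ π.hookRow then lastIndexGE (π.toFun i) (π.toFun i (π.removalCol (i + 1))) else 0
termination_by π.hookRow + 1 - i

theorem removalCol_of_le (hi : i ≤ π.hookRow) :
    π.removalCol i = lastIndexGE (π.toFun i) (π.toFun i (π.removalCol (i + 1))) := by
  rw [removalCol, if_pos hi]

theorem removalCol_hookRow_succ : π.removalCol (π.hookRow + 1) = 0 := by
  rw [removalCol, if_neg (by omega)]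

noncomputable def hookCol (π : PlanePartition) : ℕ := π.removalCol 0

noncomputable def hook (π : PlanePartition) : ℕ × ℕ := (π.hookRow, π.hookCol)

theorem le_removalCol_iff_of_toFun_ne_zero (hi : i ≤ π.hookRow)
    (hv : π.toFun i (π.removalCol (i + 1)) ≠ 0) :
    j ≤ π.removalCol i ↔ π.toFun i (π.removalCol (i + 1)) ≤ π.toFun i j := by
  obtain ⟨k, hk⟩ := π.exists_row_eq_zero i
  rw [removalCol_of_le hi, le_lastIndexGE_iff (π.antitone_row i) ⟨k, by omega⟩
    (π.antitone_row i (Nat.zero_le _))]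

theorem toFun_removalCol_succ_ne_zero (hπ : π ≠ 0) (hi : i ≤ π.hookRow) :
    π.toFun i (π.removalCol (i + 1)) ≠ 0 := by
  induction hi using Nat.decreasingInduction with
  | self => rw [removalCol_hookRow_succ]; exact (le_hookRow_iff hπ).1 le_rfl
  | of_succ i hi ih =>
    have hrun := (le_removalCol_iff_of_toFun_ne_zero (i := i + 1) hi ih).1 le_rfl
    have := π.anti_left i (π.removalCol (i + 1))
    omega

theorem le_removalCol_iff (hπ : π ≠ 0) (hi : i ≤ π.hookRow) :
    j ≤ π.removalCol i ↔ π.toFun i (π.removalCol (i + 1)) ≤ π.toFun i j :=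
  le_removalCol_iff_of_toFun_ne_zero hi (toFun_removalCol_succ_ne_zero hπ hi)

theorem removalCol_succ_le (hπ : π ≠ 0) (hi : i ≤ π.hookRow) :
    π.removalCol (i + 1) ≤ π.removalCol i :=
  (le_removalCol_iff hπ hi).2 le_rfl

noncomputable def removalPath (π : PlanePartition) : Finset (ℕ × ℕ) :=
  pathCells π.removalCol π.hookRow

theorem mem_removalPath : (i, j) ∈ π.removalPath ↔
    i ≤ π.hookRow ∧ π.removalCol (i + 1) ≤ j ∧ j ≤ π.removalCol i :=
  mem_pathCells

theorem toFun_eq_of_mem_removalPath (hπ : π ≠ 0) (hm : (i, j) ∈ π.removalPath) :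
    π.toFun i j = π.toFun i (π.removalCol (i + 1)) := by
  obtain ⟨hi, hj₁, hj₂⟩ := mem_removalPath.1 hm
  exact le_antisymm (π.antitone_row i hj₁) ((le_removalCol_iff hπ hi).1 hj₂)

theorem toFun_ne_zero_of_mem_removalPath (hπ : π ≠ 0) (hm : (i, j) ∈ π.removalPath) :
    π.toFun i j ≠ 0 := by
  rw [toFun_eq_of_mem_removalPath hπ hm]
  exact toFun_removalCol_succ_ne_zero hπ (mem_removalPath.1 hm).1

theorem toFun_lt_of_mem_removalPath_right (hπ : π ≠ 0) (hm : (i, j) ∈ π.removalPath)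
    (hm' : (i, j + 1) ∉ π.removalPath) : π.toFun i (j + 1) < π.toFun i j := by
  obtain ⟨hi, hj₁, hj₂⟩ := mem_removalPath.1 hm
  have hj : ¬ j + 1 ≤ π.removalCol i := fun hj => hm' (mem_removalPath.2 ⟨hi, by omega, hj⟩)
  rw [le_removalCol_iff hπ hi, ← toFun_eq_of_mem_removalPath hπ hm] at hj
  omega

theorem toFun_lt_of_mem_removalPath_left (hπ : π ≠ 0) (hm : (i, j) ∈ π.removalPath)
    (hm' : (i + 1, j) ∉ π.removalPath) : π.toFun (i + 1) j < π.toFun i j := by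
  obtain ⟨hi, hj₁, hj₂⟩ := mem_removalPath.1 hm
  have hpos := toFun_ne_zero_of_mem_removalPath hπ hm
  rcases hi.lt_or_eq with hi | hi
  · replace hi : i + 1 ≤ π.hookRow := hi
    have hj : ¬ j ≤ π.removalCol (i + 1) := fun hj =>
      hm' (mem_removalPath.2 ⟨hi, (removalCol_succ_le hπ hi).trans hj₁, hj⟩)
    rw [le_removalCol_iff hπ hi] at hj
    have h₁ := (le_removalCol_iff hπ hi).1 le_rfl
    have h₂ := π.anti_left i (π.removalCol (i + 1))
    have h₃ := toFun_eq_of_mem_removalPath hπ hm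
    have h₄ := π.antitone_row i hj₁
    omega
  · have h0 : π.toFun (i + 1) 0 = 0 := by
      by_contra h0
      have := (le_hookRow_iff hπ).2 h0
      omega
    have := π.toFun_le_toFun (le_refl (i + 1)) (Nat.zero_le j)
    omega

noncomputable def removeHook (π : PlanePartition) : PlanePartition where
  toFun i j := π.toFun i j - if (i, j) ∈ π.removalPath then 1 else 0
  anti_left i j := by
    by_cases hπ : π = 0
    · subst hπ; simp
    have := π.anti_left i j
    split_ifs with h₁ h₂ h₂
    · omega
    · omega
    · have := toFun_lt_of_mem_removalPath_left hπ h₂ h₁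
      omega
    · omega
  anti_right i j := by
    by_cases hπ : π = 0
    · subst hπ; simp
    have := π.anti_right i j
    split_ifs with h₁ h₂ h₂
    · omega
    · omega
    · have := toFun_lt_of_mem_removalPath_right hπ h₂ h₁
      omega
    · omega
  finite_support := π.finite_support.subset fun _ hp h0 => hp (by simp [h0])

theorem removeHook_toFun (i j : ℕ) :
    π.removeHook.toFun i j = π.toFun i j - if (i, j) ∈ π.removalPath then 1 else 0 := rfl

/-- The addition path from `(0, b)` runs along row `i` from column `additionCol b (i + 1)` to
column `additionCol b i`. -/
noncomputable def additionCol (π : PlanePartition) (b : ℕ) : ℕ → ℕ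
  | 0 => b
  | i + 1 => firstIndexLE (π.toFun i) (π.toFun i (π.additionCol b i))

theorem additionCol_succ_le_iff {b : ℕ} :
    π.additionCol b (i + 1) ≤ j ↔ π.toFun i j ≤ π.toFun i (π.additionCol b i) :=
  firstIndexLE_le_iff (π.antitone_row i) ⟨_, le_rfl⟩

theorem additionCol_succ_le {b : ℕ} : π.additionCol b (i + 1) ≤ π.additionCol b i :=
  additionCol_succ_le_iff.2 le_rfl

noncomputable def additionPath (π : PlanePartition) (h : ℕ × ℕ) : Finset (ℕ × ℕ) :=
  pathCells (π.additionCol h.2) h.1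

theorem mem_additionPath : (i, j) ∈ π.additionPath h ↔
    i ≤ h.1 ∧ π.additionCol h.2 (i + 1) ≤ j ∧ j ≤ π.additionCol h.2 i :=
  mem_pathCells

theorem toFun_eq_of_mem_additionPath (hm : (i, j) ∈ π.additionPath h) :
    π.toFun i j = π.toFun i (π.additionCol h.2 i) := by
  obtain ⟨-, hj₁, hj₂⟩ := mem_additionPath.1 hm
  exact le_antisymm (additionCol_succ_le_iff.1 hj₁) (π.antitone_row i hj₂)

theorem toFun_lt_of_mem_additionPath_right (hm : (i, j + 1) ∈ π.additionPath h)
    (hm' : (i, j) ∉ π.additionPath h) : π.toFun i (j + 1) < π.toFun i j := by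
  obtain ⟨hi, hj₁, hj₂⟩ := mem_additionPath.1 hm
  have hj : ¬ π.additionCol h.2 (i + 1) ≤ j := fun hj =>
    hm' (mem_additionPath.2 ⟨hi, hj, by omega⟩)
  rw [additionCol_succ_le_iff, ← toFun_eq_of_mem_additionPath hm] at hj
  omega

theorem toFun_lt_of_mem_additionPath_left (hm : (i + 1, j) ∈ π.additionPath h)
    (hm' : (i, j) ∉ π.additionPath h) : π.toFun (i + 1) j < π.toFun i j := by
  obtain ⟨hi, hj₁, hj₂⟩ := mem_additionPath.1 hm
  have hj : ¬ π.additionCol h.2 (i + 1) ≤ j := fun hj =>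
    hm' (mem_additionPath.2 ⟨by omega, hj, hj₂.trans additionCol_succ_le⟩)
  rw [additionCol_succ_le_iff] at hj
  have h₁ := toFun_eq_of_mem_additionPath hm
  have h₂ := π.anti_left i (π.additionCol h.2 (i + 1))
  have h₃ := toFun_eq_of_mem_additionPath (π := π) (i := i) (h := h)
    (mem_additionPath.2 ⟨by omega, le_rfl, additionCol_succ_le⟩)
  omega

noncomputable def addHook (π : PlanePartition) (h : ℕ × ℕ) : PlanePartition where
  toFun i j := π.toFun i j + if (i, j) ∈ π.additionPath h then 1 else 0
  anti_left i j := by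
    have := π.anti_left i j
    split_ifs with h₁ h₂ h₂
    · omega
    · have := toFun_lt_of_mem_additionPath_left h₁ h₂
      omega
    · omega
    · omega
  anti_right i j := by
    have := π.anti_right i j
    split_ifs with h₁ h₂ h₂
    · omega
    · have := toFun_lt_of_mem_additionPath_right h₁ h₂
      omega
    · omega
    · omega
  finite_support := (π.finite_support.union (π.additionPath h).finite_toSet).subset fun p hp => by
    by_cases hm : p ∈ π.additionPath h
    · exact Or.inr hm
    · exact Or.inl (by simpa [hm] using hp)

theorem addHook_toFun (i j : ℕ) :
    (π.addHook h).toFun i j = π.toFun i j + if (i, j) ∈ π.additionPath h then 1 else 0 := rfl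

def AdmitsHook (π : PlanePartition) (h : ℕ × ℕ) : Prop :=
  π.toFun (h.1 + 1) 0 = 0 ∧ π.additionCol h.2 (h.1 + 1) = 0

theorem vol_addHook (hh : π.AdmitsHook h) : (π.addHook h).vol = π.vol + hookLength h := by
  rw [vol_eq_vol_add_card (addHook_toFun (π := π) (h := h))]
  have := card_pathCells (c := π.additionCol h.2) (a := h.1) fun _ _ => additionCol_succ_le
  rw [hh.2] at this
  simp only [additionPath, hookLength]
  simp only [additionCol] at this
  omega

theorem additionCol_removeHook (hπ : π ≠ 0) (hi : i ≤ π.hookRow + 1) :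
    π.removeHook.additionCol π.hookCol i = π.removalCol i := by
  induction i with
  | zero => rfl
  | succ i ih =>
    replace hi : i ≤ π.hookRow := by omega
    rw [additionCol, ih (by omega)]
    refine firstIndexLE_eq fun j => ?_
    have hend : (i, π.removalCol i) ∈ π.removalPath :=
      mem_removalPath.2 ⟨hi, removalCol_succ_le hπ hi, le_rfl⟩
    have hv := toFun_removalCol_succ_ne_zero hπ hi
    have hc := toFun_eq_of_mem_removalPath hπ hend
    rw [removeHook_toFun, removeHook_toFun, if_pos hend]
    by_cases hm : (i, j) ∈ π.removalPath
    · rw [if_pos hm, toFun_eq_of_mem_removalPath hπ hm, hc]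
      simp only [(mem_removalPath.1 hm).2.1, le_refl]
    rw [if_neg hm, mem_removalPath] at *
    by_cases hj : π.removalCol (i + 1) ≤ j
    · have := (le_removalCol_iff hπ hi (j := j)).not.1 fun h => hm ⟨hi, hj, h⟩
      simp only [hj, true_iff]
      omega
    · have := π.antitone_row i (not_le.1 hj).le
      simp only [hj, false_iff]
      omega

theorem admitsHook_removeHook (hπ : π ≠ 0) : π.removeHook.AdmitsHook π.hook := by
  refine ⟨?_, (additionCol_removeHook hπ le_rfl).trans removalCol_hookRow_succ⟩
  have := (le_hookRow_iff hπ (i := π.hookRow + 1)).not.1 (by omega)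
  simp [hook, removeHook_toFun, not_not.1 this]

theorem addHook_removeHook (hπ : π ≠ 0) : π.removeHook.addHook π.hook = π := by
  have hpath : π.removeHook.additionPath π.hook = π.removalPath :=
    pathCells_congr fun _ hi => additionCol_removeHook hπ hi
  ext i j
  rw [addHook_toFun, hpath, removeHook_toFun]
  split_ifs with hm
  · have := toFun_ne_zero_of_mem_removalPath hπ hm
    omega
  · rfl

theorem vol_removeHook (hπ : π ≠ 0) : π.vol = π.removeHook.vol + hookLength π.hook := by
  conv_lhs => rw [← addHook_removeHook hπ]
  exact vol_addHook (admitsHook_removeHook hπ)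

theorem addHook_toFun_fst_zero (hh : π.AdmitsHook h) :
    (π.addHook h).toFun h.1 0 = π.toFun h.1 0 + 1 := by
  rw [addHook_toFun, if_pos (mem_additionPath.2 ⟨le_rfl, hh.2.le, Nat.zero_le _⟩)]

theorem addHook_ne_zero (hh : π.AdmitsHook h) : π.addHook h ≠ 0 := by
  rw [Ne, eq_zero_iff]
  have := (π.addHook h).toFun_le_toFun (Nat.zero_le h.1) (le_refl 0)
  have := addHook_toFun_fst_zero hh
  omega

theorem hookRow_addHook (hh : π.AdmitsHook h) : (π.addHook h).hookRow = h.1 := by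
  refine eq_of_forall_le_iff fun i => ?_
  rw [le_hookRow_iff (addHook_ne_zero hh)]
  constructor
  · intro hi
    by_contra hlt
    have hm : (i, 0) ∉ π.additionPath h := fun hm => hlt (mem_additionPath.1 hm).1
    have := π.toFun_le_toFun (show h.1 + 1 ≤ i by omega) (le_refl 0)
    rw [addHook_toFun, if_neg hm] at hi
    have := hh.1
    omega
  · intro hi
    have := (π.addHook h).toFun_le_toFun hi (le_refl 0)
    have := addHook_toFun_fst_zero hh
    omega

theorem removalCol_addHook (hh : π.AdmitsHook h) (hi : i ≤ h.1 + 1) :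
    (π.addHook h).removalCol i = π.additionCol h.2 i := by
  induction hi using Nat.decreasingInduction with
  | self => rw [← hookRow_addHook hh, removalCol_hookRow_succ, hookRow_addHook hh, hh.2]
  | of_succ i hi ih =>
    rw [removalCol_of_le (by rw [hookRow_addHook hh]; omega), ih]
    refine lastIndexGE_eq fun j => ?_
    have hstart : (i, π.additionCol h.2 (i + 1)) ∈ π.additionPath h :=
      mem_additionPath.2 ⟨by omega, le_rfl, additionCol_succ_le⟩
    rw [addHook_toFun, addHook_toFun, if_pos hstart, toFun_eq_of_mem_additionPath hstart]
    by_cases hm : (i, j) ∈ π.additionPath h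
    · rw [if_pos hm, toFun_eq_of_mem_additionPath hm]
      simp only [(mem_additionPath.1 hm).2.2, le_refl]
    rw [if_neg hm, add_zero]
    by_cases hj : j ≤ π.additionCol h.2 i
    · have := additionCol_succ_le_iff.not.1 fun h' => hm (mem_additionPath.2 ⟨by omega, h', hj⟩)
      simp only [hj, true_iff]
      omega
    · have := π.antitone_row i (not_le.1 hj).le
      simp only [hj, false_iff]
      omega

theorem hook_addHook (hh : π.AdmitsHook h) : (π.addHook h).hook = h :=
  Prod.ext (hookRow_addHook hh) (removalCol_addHook hh (Nat.zero_le _))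

theorem removeHook_addHook (hh : π.AdmitsHook h) : (π.addHook h).removeHook = π := by
  have hpath : (π.addHook h).removalPath = π.additionPath h := by
    rw [removalPath, hookRow_addHook hh]
    exact pathCells_congr fun _ hi => removalCol_addHook hh hi
  ext i j
  rw [removeHook_toFun, hpath, addHook_toFun]
  split_ifs <;> rfl

theorem additionCol_le_removalCol_iff (hπ : π ≠ 0) {b : ℕ} (hi : i ≤ π.hookRow + 1) :
    π.additionCol b i ≤ π.removalCol i ↔ b ≤ π.hookCol := by
  induction i with
  | zero => rfl
  | succ i ih =>
    rw [additionCol_succ_le_iff, ← le_removalCol_iff hπ (by omega), ih (by omega)]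

theorem admitsHook_zero : (0 : PlanePartition).AdmitsHook h :=
  ⟨rfl, Nat.eq_zero_of_le_zero <| additionCol_succ_le_iff.2 le_rfl⟩

theorem admitsHook_iff (hπ : π ≠ 0) : π.AdmitsHook h ↔ hookKey π.hook ≤ hookKey h := by
  have hrow : π.toFun (h.1 + 1) 0 = 0 ↔ π.hookRow < h.1 + 1 := by
    rw [← not_le, le_hookRow_iff hπ, not_not]
  rw [hookKey_le_hookKey_iff, hook, AdmitsHook, hrow]
  rcases lt_trichotomy π.hookRow h.1 with hlt | heq | hgt
  · have hzero : π.toFun h.1 0 = 0 := by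
      by_contra h0
      have := (le_hookRow_iff hπ).2 h0
      omega
    have := (additionCol_succ_le_iff (π := π) (b := h.2) (i := h.1) (j := 0)).2
      (by rw [hzero]; exact Nat.zero_le _)
    simp only [hlt, true_or, iff_true]
    omega
  · have := additionCol_le_removalCol_iff hπ (b := h.2) (le_refl (π.hookRow + 1))
    rw [removalCol_hookRow_succ, Nat.le_zero, heq] at this
    simp [heq, this]
  · simp only [show ¬ π.hookRow < h.1 + 1 by omega, false_and, false_iff]
    omega

open Classical in
noncomputable def hooks (π : PlanePartition) : (ℕ × ℕ) →₀ ℕ :=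
  if hπ : π = 0 then 0 else π.removeHook.hooks + Finsupp.single π.hook 1
termination_by π.vol
decreasing_by rw [vol_removeHook hπ, hookLength]; omega

@[simp]
theorem hooks_zero : hooks 0 = 0 := by
  rw [hooks, dif_pos rfl]

theorem hooks_of_ne_zero (hπ : π ≠ 0) :
    π.hooks = π.removeHook.hooks + Finsupp.single π.hook 1 := by
  rw [hooks, dif_neg hπ]

theorem weight_hooks (π : PlanePartition) : Finsupp.weight hookLength π.hooks = π.vol := by
  induction π using hooks.induct with
  | case1 => simp
  | case2 π hπ ih =>
    rw [hooks_of_ne_zero hπ, map_add, ih, Finsupp.weight_single, one_smul, vol_removeHook hπ]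

theorem hook_mem_support (hπ : π ≠ 0) : π.hook ∈ π.hooks.support := by
  simp [hooks_of_ne_zero hπ]

theorem hooks_eq_zero_iff : π.hooks = 0 ↔ π = 0 := by
  refine ⟨fun h => by_contra fun hπ => ?_, fun h => h ▸ hooks_zero⟩
  simpa [h] using hook_mem_support hπ

theorem hookKey_le_of_mem_support (hπ : π ≠ 0) {p : ℕ × ℕ} (hp : p ∈ π.hooks.support) :
    hookKey p ≤ hookKey π.hook := by
  induction π using hooks.induct with
  | case1 => exact absurd rfl hπ
  | case2 π hπ ih =>
    rw [hooks_of_ne_zero hπ] at hp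
    rcases mem_union.1 (Finsupp.support_add hp) with hp | hp
    · have hπ' : π.removeHook ≠ 0 := fun h0 => by simp [h0] at hp
      exact (ih hπ' hp).trans ((admitsHook_iff hπ').1 (admitsHook_removeHook hπ))
    · rw [mem_singleton.1 (Finsupp.support_single_subset hp)]

theorem hooks_injective : Function.Injective hooks := by
  intro π₁ π₂ h
  induction π₁ using hooks.induct generalizing π₂ with
  | case1 => exact (hooks_eq_zero_iff.1 (h ▸ hooks_zero)).symm
  | case2 π₁ hπ₁ ih =>
    have hπ₂ : π₂ ≠ 0 := fun h0 => hπ₁ (hooks_eq_zero_iff.1 (by rw [h, h0, hooks_zero]))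
    have hhook : π₁.hook = π₂.hook := hookKey_injective <| le_antisymm
      (hookKey_le_of_mem_support hπ₂ (h ▸ hook_mem_support hπ₁))
      (hookKey_le_of_mem_support hπ₁ (h ▸ hook_mem_support hπ₂))
    rw [hooks_of_ne_zero hπ₁, hooks_of_ne_zero hπ₂, hhook] at h
    rw [← addHook_removeHook hπ₁, ← addHook_removeHook hπ₂, ih (add_right_cancel h), hhook]

theorem hooks_surjective : Function.Surjective hooks := by
  intro f
  induction hn : Finsupp.weight hookLength f using Nat.strong_induction_on generalizing f with
  | _ n ih =>
  rcases eq_or_ne f 0 with rfl | hf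
  · exact ⟨0, hooks_zero⟩
  obtain ⟨h, hmem, hmax⟩ :=
    f.support.exists_max_image hookKey (Finsupp.support_nonempty_iff.2 hf)
  set f' := f - Finsupp.single h 1
  have hsplit : f' + Finsupp.single h 1 = f := tsub_add_cancel_of_le <|
    Finsupp.single_le_iff.2 (Nat.one_le_iff_ne_zero.2 (Finsupp.mem_support_iff.1 hmem))
  have hlt : Finsupp.weight hookLength f' < n := by
    rw [← hn, ← hsplit, map_add, Finsupp.weight_single]
    simp [hookLength]
  obtain ⟨π, hπ⟩ := ih _ hlt f' rfl
  have hadm : π.AdmitsHook h := by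
    rcases eq_or_ne π 0 with rfl | hπ0
    · exact admitsHook_zero
    have hsub : f'.support ⊆ f.support := Finsupp.support_mono tsub_le_self
    exact (admitsHook_iff hπ0).2 (hmax _ (hsub (hπ ▸ hook_mem_support hπ0)))
  refine ⟨π.addHook h, ?_⟩
  rw [hooks_of_ne_zero (addHook_ne_zero hadm), removeHook_addHook hadm, hook_addHook hadm, hπ,
    hsplit]

noncomputable def hooksEquiv : PlanePartition ≃ ((ℕ × ℕ) →₀ ℕ) :=
  Equiv.ofBijective hooks ⟨hooks_injective, hooks_surjective⟩

@[simp]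
theorem coe_hooksEquiv : ⇑hooksEquiv = hooks := rfl

end PlanePartition

theorem Finset.sum_finsupp_prod {ι M : Type*} [CommSemiring M] (s : Finset ι)
    (t : ι → Finset ℕ) {g : ι → ℕ → M} (hg : ∀ i ∈ s, g i 0 = 1) :
    ∑ f ∈ s.finsupp t, f.prod g = ∏ i ∈ s, ∑ k ∈ t i, g i k := by
  classical
  rw [Finset.finsupp, sum_map, prod_sum]
  refine sum_congr rfl fun p _ => ?_
  change (Finsupp.indicator s p).prod g = _
  rw [Finsupp.prod_of_support_subset _ (Finsupp.support_indicator_subset _ _) _ hg,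
    ← prod_attach]
  exact prod_congr rfl fun i _ => by simp [Finsupp.indicator_of_mem i.2]

theorem pow_weight {ι M : Type*} [CommMonoid M] (q : M) (w : ι → ℕ) (f : ι →₀ ℕ) :
    q ^ Finsupp.weight w f = f.prod fun i k => (q ^ w i) ^ k := by
  simp only [Finsupp.weight_apply, Finsupp.sum, Finsupp.prod, ← prod_pow_eq_pow_sum,
    smul_eq_mul, ← pow_mul, mul_comm]

/-- The partial sums are squeezed between finite products of truncated geometric series. -/
theorem hasSum_finsupp_prod_pow {ι : Type*} {x : ι → ℝ} (hx0 : ∀ i, 0 ≤ x i)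
    (hx1 : ∀ i, x i < 1) (hx : Multipliable fun i => (1 - x i)⁻¹) :
    HasSum (fun f : ι →₀ ℕ => f.prod fun i k => x i ^ k) (∏' i, (1 - x i)⁻¹) := by
  classical
  have term_nonneg (f : ι →₀ ℕ) : 0 ≤ f.prod fun i k => x i ^ k :=
    prod_nonneg fun i _ => pow_nonneg (hx0 i) _
  have truncated (s : Finset ι) (N : ℕ) :
      ∑ f ∈ s.finsupp (fun _ => range N), f.prod (fun i k => x i ^ k) =
        ∏ i ∈ s, ∑ k ∈ range N, x i ^ k :=
    s.sum_finsupp_prod _ fun i _ => pow_zero _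
  have geom (i : ι) : HasSum (fun k => x i ^ k) (1 - x i)⁻¹ :=
    hasSum_geometric_of_lt_one (hx0 i) (hx1 i)
  refine hasSum_of_isLUB_of_nonneg _ term_nonneg ⟨?_, fun b hb => ?_⟩
  · rintro _ ⟨t, rfl⟩
    set s := t.sup Finsupp.support
    set N := t.sup Finsupp.degree + 1
    have hts : t ⊆ s.finsupp fun _ => range N := fun f hf =>
      mem_finsupp_iff.2 ⟨le_sup hf, fun i _ => mem_range.2 <|
        Nat.lt_succ_of_le ((f.le_degree i).trans (le_sup (f := Finsupp.degree) hf))⟩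
    calc ∑ f ∈ t, f.prod (fun i k => x i ^ k)
        ≤ ∑ f ∈ s.finsupp (fun _ => range N), f.prod (fun i k => x i ^ k) :=
          sum_le_sum_of_subset_of_nonneg hts fun f _ _ => term_nonneg f
      _ = ∏ i ∈ s, ∑ k ∈ range N, x i ^ k := truncated s N
      _ ≤ ∏ i ∈ s, (1 - x i)⁻¹ :=
          prod_le_prod (fun i _ => sum_nonneg fun k _ => pow_nonneg (hx0 i) k)
            fun i _ => sum_le_hasSum _ (fun k _ => pow_nonneg (hx0 i) k) (geom i)
      _ ≤ ∏' i, (1 - x i)⁻¹ :=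
          (prod_mono_set_of_one_le fun i => one_le_inv₀ (by linarith [hx1 i]) |>.2
            (by linarith [hx0 i])).ge_of_tendsto hx.hasProd s
  · refine hx.tprod_le_of_prod_le fun s => le_of_tendsto'
      (tendsto_finsetProd s fun i _ => (geom i).tendsto_sum_nat) fun N => ?_
    rw [← truncated]
    exact hb ⟨_, rfl⟩

theorem multipliable_inv_one_sub {ι : Type*} {x : ι → ℝ} {c : ℝ} (hx0 : ∀ i, 0 ≤ x i)
    (hxc : ∀ i, x i ≤ c) (hc : c < 1) (hx : Summable x) :
    Multipliable fun i => (1 - x i)⁻¹ := by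
  have hpos (i : ι) : 0 < 1 - x i := by linarith [hxc i]
  have hsum : Summable fun i => x i / (1 - x i) :=
    (hx.mul_right (1 - c)⁻¹).of_nonneg_of_le (fun i => div_nonneg (hx0 i) (hpos i).le)
      fun i => div_le_div_of_nonneg_left (hx0 i) (by linarith) (by linarith [hxc i])
  refine (Real.multipliable_one_add_of_summable hsum).congr fun i => ?_
  field_simp [(hpos i).ne']
  ring

theorem HasProd.prod_antidiagonal {M : Type*} [CommMonoid M] [TopologicalSpace M]
    [ContinuousMul M] [RegularSpace M] {f : ℕ × ℕ → M} {a : M} (hf : HasProd f a) :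
    HasProd (fun n => ∏ p ∈ antidiagonal n, f p) a :=
  (HasAntidiagonal.sigmaAntidiagonalEquivProd.hasProd_iff.2 hf).sigma fun n => by
    rw [← prod_coe_sort]
    exact hasProd_fintype _

open PlanePartition in
/-- MacMahon's generating function: for every `0 < q < 1` the sum of `q^|π|` over all
plane partitions converges and equals `∏_{n ≥ 1} (1 - qⁿ)^{-n}`. -/
theorem macmahon_product (q : ℝ) (hq0 : 0 < q) (hq1 : q < 1) :
    Summable (fun π : PlanePartition => q ^ π.vol) ∧
    Multipliable (fun n : ℕ => ((1 - q ^ (n + 1))⁻¹) ^ (n + 1)) ∧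
    ∑' π : PlanePartition, q ^ π.vol = ∏' n : ℕ, ((1 - q ^ (n + 1))⁻¹) ^ (n + 1) := by
  set x : ℕ × ℕ → ℝ := fun h => q ^ hookLength h
  have hx0 (h : ℕ × ℕ) : 0 ≤ x h := by positivity
  have hxq (h : ℕ × ℕ) : x h ≤ q := pow_le_of_le_one hq0.le hq1.le (by simp [hookLength])
  have hx : Summable x := by
    have hgeom := summable_geometric_of_lt_one hq0.le hq1
    refine ((hgeom.mul_of_nonneg hgeom (fun _ => by positivity) fun _ => by positivity).mul_left
      q).congr fun h => ?_
    simp only [x, hookLength, pow_add, pow_one]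
    ring
  have hmul := multipliable_inv_one_sub hx0 hxq hq1 hx
  have hsum : HasSum (fun π : PlanePartition => q ^ π.vol) (∏' h, (1 - x h)⁻¹) := by
    refine (hooksEquiv.hasSum_iff.2 (hasSum_finsupp_prod_pow hx0
      (fun h => (hxq h).trans_lt hq1) hmul)).congr_fun fun π => ?_
    rw [Function.comp_apply, coe_hooksEquiv, ← pow_weight, weight_hooks]
  have hprod : HasProd (fun n : ℕ => ((1 - q ^ (n + 1))⁻¹) ^ (n + 1)) (∏' h, (1 - x h)⁻¹) := by
    refine hmul.hasProd.prod_antidiagonal.congr_fun fun n => ?_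
    rw [prod_congr rfl fun p hp => by rw [show x p = q ^ (n + 1) by
      simp only [x, hookLength, mem_antidiagonal.1 hp]], prod_const, Nat.card_antidiagonal]
  exact ⟨hsum.summable, hprod.multipliable, hsum.tsum_eq.trans hprod.tprod_eq.symm⟩
end

section
/- The diagonal-slice map π ↦ {λ(t)}_{t∈ℤ}, where λ(t)_i = π(i + max(0,−t), i + max(0,t)) for i ≥ 1, is a bijection from the set of plane partitions onto the set of sequences {λ(t)}_{t∈ℤ} of partitions such that λ(t) = ∅ for all |t| sufficiently large, λ(t) ≺ λ(t+1) for every t < 0, and λ(t) ≻ λ(t+1) for every t ≥ 0. Moreover, under this bijection |π| = Σ_{t∈ℤ} |λ(t)|. -/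
/-- `f : ℕ → ℕ` (0-indexed) is a partition: weakly decreasing and eventually zero. -/
def IsPartitionFun (f : ℕ → ℕ) : Prop :=
  (∀ i, f (i + 1) ≤ f i) ∧ ∃ N, ∀ i, N ≤ i → f i = 0

/-- Interlacing `f ≻ g` of (0-indexed) partitions: `f 0 ≥ g 0 ≥ f 1 ≥ g 1 ≥ …`. -/
def Interlace (f g : ℕ → ℕ) : Prop :=
  ∀ i, g i ≤ f i ∧ f (i + 1) ≤ g i

/-- The diagonal slices of a plane partition: `λ(t)_i = π(i + max(0,-t), i + max(0,t))`
(0-indexed in `i`). -/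
def slices (π : PlanePartition) : ℤ → ℕ → ℕ :=
  fun t i => π.toFun (i + (-t).toNat) (i + t.toNat)

/-- A sequence `{λ(t)}_{t ∈ ℤ}` of partitions, eventually empty in both directions,
with `λ(t) ≺ λ(t+1)` for `t < 0` and `λ(t) ≻ λ(t+1)` for `t ≥ 0`. -/
def AdmissibleSeq (Λ : ℤ → ℕ → ℕ) : Prop :=
  (∀ t, IsPartitionFun (Λ t)) ∧
  (∃ T : ℕ, ∀ t : ℤ, (T : ℤ) ≤ |t| → ∀ i, Λ t i = 0) ∧
  (∀ t : ℤ, t < 0 → Interlace (Λ (t + 1)) (Λ t)) ∧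
  (∀ t : ℤ, 0 ≤ t → Interlace (Λ t) (Λ (t + 1)))

namespace PPaux

lemma anti (π : PlanePartition) : ∀ {i i' j j' : ℕ}, i ≤ i' → j ≤ j' →
    π.toFun i' j' ≤ π.toFun i j := by
  have h1 : ∀ i j k, π.toFun (i + k) j ≤ π.toFun i j := by
    intro i j k
    induction k with
    | zero => simp
    | succ n ih => exact le_trans (π.anti_left (i + n) j) ih
  have h2 : ∀ i j k, π.toFun i (j + k) ≤ π.toFun i j := by
    intro i j k
    induction k with
    | zero => simp
    | succ n ih => exact le_trans (π.anti_right i (j + n)) ih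
  intro i i' j j' hi hj
  calc π.toFun i' j' = π.toFun (i + (i' - i)) (j + (j' - j)) := by
        rw [Nat.add_sub_cancel' hi, Nat.add_sub_cancel' hj]
    _ ≤ π.toFun (i + (i' - i)) j := h2 _ _ _
    _ ≤ π.toFun i j := h1 _ _ _

lemma bound (π : PlanePartition) : ∃ N : ℕ, ∀ i j, N ≤ max i j → π.toFun i j = 0 := by
  refine ⟨π.finite_support.toFinset.sup (fun p => max p.1 p.2) + 1, fun i j h => ?_⟩
  by_contra hne
  have hmem : (i, j) ∈ π.finite_support.toFinset := by
    rw [Set.Finite.mem_toFinset]; exact hne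
  have := Finset.le_sup (f := fun p : ℕ × ℕ => max p.1 p.2) hmem
  dsimp only at this
  omega

lemma slices_eq (π : PlanePartition) (i j : ℕ) :
    π.toFun i j = slices π ((j : ℤ) - i) (min i j) := by
  unfold slices
  congr 1 <;> omega

/-- The inverse of the diagonal re-indexing as an equivalence. -/
def diagEquiv : ℤ × ℕ ≃ ℕ × ℕ where
  toFun q := (q.2 + (-q.1).toNat, q.2 + q.1.toNat)
  invFun p := ((p.2 : ℤ) - p.1, min p.1 p.2)
  left_inv := by rintro ⟨t, i⟩; simp only [Prod.mk.injEq]; constructor <;> omega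
  right_inv := by rintro ⟨i, j⟩; simp only [Prod.mk.injEq]; constructor <;> omega

lemma maps_to (π : PlanePartition) : AdmissibleSeq (slices π) := by
  obtain ⟨N, hN⟩ := bound π
  refine ⟨fun t => ⟨fun i => ?_, N, fun i hi => ?_⟩, ⟨N, fun t ht i => ?_⟩,
    fun t ht i => ⟨?_, ?_⟩, fun t ht i => ⟨?_, ?_⟩⟩
  · exact anti π (by omega) (by omega)
  · exact hN _ _ (by omega)
  · rcases le_abs.mp ht with h | h <;> exact hN _ _ (by omega)
  · exact anti π (by omega) (by omega)
  · exact anti π (by omega) (by omega)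
  · exact anti π (by omega) (by omega)
  · exact anti π (by omega) (by omega)

lemma inj : Set.InjOn slices Set.univ := by
  intro π₁ _ π₂ _ h
  have hfun : π₁.toFun = π₂.toFun := by
    funext i j
    rw [slices_eq π₁ i j, slices_eq π₂ i j, h]
  cases π₁; cases π₂; simpa using hfun

lemma surj : Set.SurjOn slices Set.univ {Λ : ℤ → ℕ → ℕ | AdmissibleSeq Λ} := by
  rintro Λ hΛ
  obtain ⟨hpart, ⟨T, hT⟩, hneg, hpos⟩ := hΛ
  have hM : ∃ M : ℕ, ∀ t : ℤ, ∀ i : ℕ, M ≤ i → Λ t i = 0 := by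
    refine ⟨(Finset.Icc (-(T:ℤ)) T).sup (fun t => Classical.choose (hpart t).2),
      fun t i hi => ?_⟩
    by_cases ht : (T : ℤ) ≤ |t|
    · exact hT t ht i
    · have hmem : t ∈ Finset.Icc (-(T:ℤ)) T := by
        rw [Finset.mem_Icc]
        rcases abs_lt.mp (lt_of_not_ge ht) with ⟨h1, h2⟩
        omega
      exact Classical.choose_spec (hpart t).2 i
        (le_trans (Finset.le_sup (f := fun t => Classical.choose (hpart t).2) hmem) hi)
  obtain ⟨M, hM⟩ := hM
  refine ⟨⟨fun i j => Λ ((j : ℤ) - i) (min i j), ?_, ?_, ?_⟩, Set.mem_univ _, ?_⟩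
  · -- anti_left
    intro i j
    push_cast
    rcases le_or_gt j i with hji | hij
    · have h1 : min (i + 1) j = j := by omega
      have h2 : min i j = j := by omega
      rw [h1, h2]
      have := (hneg ((j:ℤ) - ((i:ℤ)+1)) (by omega) j).1
      have he : (j:ℤ) - ((i:ℤ)+1) + 1 = (j:ℤ) - i := by ring
      rwa [he] at this
    · have h1 : min (i + 1) j = i + 1 := by omega
      have h2 : min i j = i := by omega
      rw [h1, h2]
      have := (hpos ((j:ℤ) - ((i:ℤ)+1)) (by omega) i).2
      have he : (j:ℤ) - ((i:ℤ)+1) + 1 = (j:ℤ) - i := by ring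
      rwa [he] at this
  · -- anti_right
    intro i j
    push_cast
    rcases le_or_gt i j with hij | hji
    · have h1 : min i (j + 1) = i := by omega
      have h2 : min i j = i := by omega
      rw [h1, h2]
      have := (hpos ((j:ℤ) - i) (by omega) i).1
      have he : (j:ℤ) - i + 1 = ((j:ℤ) + 1) - i := by ring
      rwa [he] at this
    · have h1 : min i (j + 1) = j + 1 := by omega
      have h2 : min i j = j := by omega
      rw [h1, h2]
      have := (hneg ((j:ℤ) - i) (by omega) j).2
      have he : (j:ℤ) - i + 1 = ((j:ℤ) + 1) - i := by ring
      rwa [he] at this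
  · -- finite support
    apply Set.Finite.subset (Set.finite_Icc ((0:ℕ), (0:ℕ)) (M + T, M + T))
    rintro ⟨i, j⟩ hij
    simp only [Set.mem_setOf_eq] at hij
    have h1 : ¬ ((T:ℤ) ≤ |(j:ℤ) - i|) := fun h => hij (hT _ h _)
    have h2 : ¬ (M ≤ min i j) := fun h => hij (hM _ _ h)
    rw [not_le, abs_lt] at h1
    simp only [Set.mem_Icc, Prod.mk_le_mk]
    exact ⟨⟨Nat.zero_le _, Nat.zero_le _⟩, by omega, by omega⟩
  · -- slices of this plane partition equal Λ
    funext t i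
    show Λ ((↑(i + t.toNat) : ℤ) - ↑(i + (-t).toNat)) (min (i + (-t).toNat) (i + t.toNat)) = Λ t i
    have h1 : (↑(i + t.toNat) : ℤ) - ↑(i + (-t).toNat) = t := by push_cast; omega
    have h2 : min (i + (-t).toNat) (i + t.toNat) = i := by omega
    rw [h1, h2]

end PPaux

/-- The diagonal-slice map is a bijection from plane partitions onto admissible
interlacing sequences of partitions, and it transforms the volume `|π|` into
`Σ_{t ∈ ℤ} |λ(t)|`. -/
theorem slices_bijective :
    Set.BijOn slices Set.univ {Λ : ℤ → ℕ → ℕ | AdmissibleSeq Λ} ∧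
    ∀ π : PlanePartition,
      ((π.vol : ℝ)) = ∑' t : ℤ, ∑' i : ℕ, ((slices π t i : ℝ)) := by
  constructor
  · exact ⟨fun π _ => PPaux.maps_to π, PPaux.inj, PPaux.surj⟩
  · intro π
    set f : ℕ × ℕ → ℝ := fun p => (π.toFun p.1 p.2 : ℝ) with hf
    have hsupp : (Function.support f).Finite := by
      apply π.finite_support.subset
      intro p hp
      simp only [Function.mem_support, hf, ne_eq, Nat.cast_eq_zero] at hp
      exact hp
    have hsum : Summable f := summable_of_finite_support hsupp
    have hcomp : (fun q : ℤ × ℕ => ((slices π q.1 q.2 : ℕ) : ℝ)) = f ∘ PPaux.diagEquiv := rfl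
    have hsum2 : Summable (fun q : ℤ × ℕ => ((slices π q.1 q.2 : ℕ) : ℝ)) := by
      rw [hcomp]; exact (PPaux.diagEquiv.summable_iff).mpr hsum
    have h1 : ∑' t : ℤ, ∑' i : ℕ, ((slices π t i : ℝ)) = ∑' q : ℤ × ℕ, ((slices π q.1 q.2 : ℝ)) :=
      (Summable.tsum_prod' hsum2 fun t => hsum2.prod_factor t).symm
    have h2 : ∑' q : ℤ × ℕ, ((slices π q.1 q.2 : ℝ)) = ∑' p : ℕ × ℕ, f p := by
      rw [hcomp]; exact PPaux.diagEquiv.tsum_eq f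
    have h3 : ∑' p : ℕ × ℕ, f p = ∑ p ∈ π.finite_support.toFinset, f p := by
      apply tsum_eq_sum
      intro p hp
      simp only [Set.Finite.mem_toFinset, Set.mem_setOf_eq, not_not] at hp
      simp [hf, hp]
    rw [h1, h2, h3, PlanePartition.vol, Nat.cast_sum]
end

section
/- Let λ and μ be partitions, let n be at least the number of nonzero parts of each, and let c be an element of a commutative ring. Define the n×n matrix M by M_{ij} = c^{λ_i − μ_j − i + j} if λ_i − μ_j − i + j ≥ 0 and M_{ij} = 0 otherwise (with c⁰ = 1). Then det M = c^{|λ| − |μ|} if μ ≺ λ (i.e. λ_1 ≥ μ_1 ≥ λ_2 ≥ μ_2 ≥ …), and det M = 0 otherwise. In particular det M does not depend on the choice of n. -/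
/-- A partition: a weakly decreasing, eventually zero sequence of naturals (0-indexed). -/
structure Partition' where
  f : ℕ → ℕ
  mono : ∀ i, f (i + 1) ≤ f i
  fin : ∃ N, ∀ i, N ≤ i → f i = 0

/-- The number of nonzero parts of a partition. -/
noncomputable def Partition'.len (l : Partition') : ℕ :=
  sInf {N | ∀ i, N ≤ i → l.f i = 0}

/-- The size `|λ| = Σ λ_i` of a partition. -/
noncomputable def Partition'.size (l : Partition') : ℕ :=
  ∑ i ∈ Finset.range l.len, l.f i

/-- Interlacing `μ ≺ λ`: `λ_1 ≥ μ_1 ≥ λ_2 ≥ μ_2 ≥ …` (0-indexed). -/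
def Partition'.Interlaces (m l : Partition') : Prop :=
  ∀ i, m.f i ≤ l.f i ∧ l.f (i + 1) ≤ m.f i

namespace JTaux

variable {R : Type*} [CommRing R]

lemma part_zero (p : Partition') {i : ℕ} (h : p.len ≤ i) : p.f i = 0 := by
  have hne : {N | ∀ i, N ≤ i → p.f i = 0}.Nonempty := p.fin
  exact Nat.sInf_mem hne i h

lemma sum_range_size (p : Partition') {n : ℕ} (h : p.len ≤ n) :
    ∑ i ∈ Finset.range n, p.f i = p.size := by
  rw [Partition'.size]
  symm
  apply Finset.sum_subset (Finset.range_subset_range.2 h)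
  intro x _ hx
  exact part_zero p (le_of_not_gt (by simpa using hx))

/-- A determinant vanishes if there is a zero lower-left block that is too big. -/
lemma det_zero_of_block {n : ℕ} (M : Matrix (Fin n) (Fin n) R) (i : Fin n)
    (h : ∀ k j : Fin n, i ≤ k → j ≤ i → M k j = 0) : M.det = 0 := by
  rw [Matrix.det_apply]
  refine Finset.sum_eq_zero fun σ _ => ?_
  obtain ⟨j, hj, hσj⟩ : ∃ j : Fin n, j ≤ i ∧ i ≤ σ j := by
    by_contra hc
    push_neg at hc
    have hmaps : ∀ j ∈ Finset.Iic i, σ j ∈ Finset.Iio i := by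
      intro j hj
      exact Finset.mem_Iio.2 (hc j (Finset.mem_Iic.1 hj))
    have hcard := Finset.card_le_card_of_injOn σ hmaps (σ.injective.injOn)
    rw [Fin.card_Iic, Fin.card_Iio] at hcard
    omega
  have hz : (∏ k : Fin n, M (σ k) k) = 0 :=
    Finset.prod_eq_zero (Finset.mem_univ j) (h (σ j) j hσj hj)
  rw [hz, smul_zero]

/-- A determinant vanishes if one row is a scalar multiple of another. -/
lemma det_zero_of_prop_rows {n : ℕ} (M : Matrix (Fin n) (Fin n) R) (k k' : Fin n)
    (hne : k ≠ k') (r : R) (h : ∀ j, M k j = r * M k' j) : M.det = 0 := by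
  have hM : M = Matrix.updateRow M k (r • M k') := by
    ext a b
    by_cases ha : a = k
    · subst ha; simp [h b]
    · simp [Matrix.updateRow_ne ha]
  rw [hM, Matrix.det_updateRow_smul]
  have : Matrix.det (Matrix.updateRow M k (M k')) = 0 := by
    apply Matrix.det_zero_of_row_eq hne
    rw [Matrix.updateRow_self, Matrix.updateRow_ne (Ne.symm hne)]
  rw [this, mul_zero]

/-- Case B: if `0 ≤ A (i+1) + B i` for some `i` with `i+1 < n`, the determinant of the
truncated-exponential matrix vanishes. -/
lemma detB (c : R) (A B : ℕ → ℤ) (hA : ∀ i, A (i + 1) ≤ A i) (hB : Monotone B) (n : ℕ) :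
    ∀ i, i + 1 < n → 0 ≤ A (i + 1) + B i →
      (Matrix.of fun i j : Fin n =>
        if 0 ≤ A i + B j then c ^ (A i + B j).toNat else 0).det = 0 := by
  intro i
  induction i using Nat.strong_induction_on with
  | _ i IH =>
    intro hin hpos
    by_cases hall : ∀ j : Fin n, A (i + 1) + B j < 0 → A i + B j < 0
    · apply det_zero_of_prop_rows _ ⟨i, by omega⟩ ⟨i + 1, hin⟩ (by simp [Fin.ext_iff])
        (c ^ (A i - A (i + 1)).toNat)
      intro j
      simp only [Matrix.of_apply]
      by_cases hj : 0 ≤ A (i + 1) + B j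
      · have hd : 0 ≤ A i - A (i + 1) := by have := hA i; linarith
        have h1 : 0 ≤ A i + B j := by linarith
        rw [if_pos h1, if_pos hj, ← pow_add]
        congr 1
        rw [← Int.toNat_add hd hj]
        congr 1; ring
      · rw [if_neg hj, if_neg (not_le.2 (hall j (not_le.1 hj))), mul_zero]
    · push_neg at hall
      obtain ⟨j, hj1, hj2⟩ := hall
      have hji : (j : ℕ) < i := by
        by_contra h'
        have : B i ≤ B j := hB (le_of_not_gt h')
        linarith
      have hBj : B j ≤ B (i - 1) := hB (by omega)
      have hAi : A i = A (i - 1 + 1) := by congr 1; omega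
      exact IH (i - 1) (by omega) (by omega) (by rw [← hAi]; linarith)

end JTaux

open JTaux in
/-- The Jacobi–Trudi determinant for `s_{λ/μ}` under the specialization `h_k = c^k`:
its value is `c^{|λ|-|μ|}` if `μ ≺ λ`, and `0` otherwise; in particular it is
independent of the size `n` of the matrix as long as `n` is at least the number of
nonzero parts of `λ` and of `μ`. -/
theorem det_specialized_jacobi_trudi {R : Type*} [CommRing R] (c : R)
    (lam mu : Partition') (n : ℕ) (hl : lam.len ≤ n) (hm : mu.len ≤ n) :
    (mu.Interlaces lam →
      Matrix.det (Matrix.of fun i j : Fin n =>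
        if 0 ≤ (lam.f i : ℤ) - (mu.f j : ℤ) - (i : ℤ) + (j : ℤ) then
          c ^ ((lam.f i : ℤ) - (mu.f j : ℤ) - (i : ℤ) + (j : ℤ)).toNat
        else 0) = c ^ (lam.size - mu.size)) ∧
    (¬ mu.Interlaces lam →
      Matrix.det (Matrix.of fun i j : Fin n =>
        if 0 ≤ (lam.f i : ℤ) - (mu.f j : ℤ) - (i : ℤ) + (j : ℤ) then
          c ^ ((lam.f i : ℤ) - (mu.f j : ℤ) - (i : ℤ) + (j : ℤ)).toNat
        else 0) = 0) := by
  set A : ℕ → ℤ := fun i => (lam.f i : ℤ) - i with hAdef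
  set B : ℕ → ℤ := fun j => (j : ℤ) - mu.f j with hBdef
  have hA : ∀ i, A (i + 1) ≤ A i := by
    intro i
    have := lam.mono i
    simp only [hAdef]
    push_cast
    omega
  have hAmono : Antitone A := antitone_nat_of_succ_le hA
  have hB : Monotone B := by
    apply monotone_nat_of_le_succ
    intro j
    have := mu.mono j
    simp only [hBdef]
    push_cast
    omega
  have hMeq : (Matrix.of fun i j : Fin n =>
      if 0 ≤ (lam.f i : ℤ) - (mu.f j : ℤ) - (i : ℤ) + (j : ℤ) then
        c ^ ((lam.f i : ℤ) - (mu.f j : ℤ) - (i : ℤ) + (j : ℤ)).toNat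
      else 0) = (Matrix.of fun i j : Fin n =>
      if 0 ≤ A (i : ℕ) + B (j : ℕ) then c ^ (A (i : ℕ) + B (j : ℕ)).toNat else 0) := by
    ext i j
    have : (lam.f i : ℤ) - (mu.f j : ℤ) - (i : ℤ) + (j : ℤ) = A (i : ℕ) + B (j : ℕ) := by
      simp only [hAdef, hBdef]; push_cast; ring
    simp only [Matrix.of_apply, this]
  rw [hMeq]
  constructor
  · -- interlacing: upper triangular
    intro hint
    rw [Matrix.det_of_upperTriangular]
    · have hdiag : ∀ i : Fin n,
          (if 0 ≤ A (i : ℕ) + B (i : ℕ) then c ^ (A (i : ℕ) + B (i : ℕ)).toNat else 0)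
            = c ^ (lam.f i - mu.f i) := by
        intro i
        have h1 := (hint i).1
        have h2 : 0 ≤ A (i : ℕ) + B (i : ℕ) := by simp only [hAdef, hBdef]; push_cast; omega
        rw [if_pos h2]
        congr 1
        simp only [hAdef, hBdef]
        omega
      have : (∏ i : Fin n, Matrix.of (fun i j : Fin n =>
          if 0 ≤ A (i : ℕ) + B (j : ℕ) then c ^ (A (i : ℕ) + B (j : ℕ)).toNat else 0) i i)
          = ∏ i : Fin n, c ^ (lam.f i - mu.f i) := by
        refine Finset.prod_congr rfl fun i _ => ?_
        simp only [Matrix.of_apply]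
        exact hdiag i
      rw [this, Finset.prod_pow_eq_pow_sum]
      congr 1
      rw [Fin.sum_univ_eq_sum_range (fun i => lam.f i - mu.f i) n]
      have hsum : ∑ i ∈ Finset.range n, (lam.f i - mu.f i) + ∑ i ∈ Finset.range n, mu.f i
          = ∑ i ∈ Finset.range n, lam.f i := by
        rw [← Finset.sum_add_distrib]
        exact Finset.sum_congr rfl fun i _ => Nat.sub_add_cancel (hint i).1
      have hls := sum_range_size lam hl
      have hms := sum_range_size mu hm
      omega
    · -- BlockTriangular id
      intro i j hij
      simp only [Matrix.of_apply]
      rw [if_neg]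
      have hji : (j : ℕ) < (i : ℕ) := hij
      have h1 : A (i : ℕ) ≤ A ((j : ℕ) + 1) := hAmono (by omega)
      have h2 : A ((j : ℕ) + 1) + B (j : ℕ) < 0 := by
        have := (hint (j : ℕ)).2
        simp only [hAdef, hBdef]
        push_cast
        omega
      push_neg
      linarith
  · -- non-interlacing: determinant vanishes
    intro hnint
    rw [Partition'.Interlaces] at hnint
    push_neg at hnint
    obtain ⟨i, hi⟩ := hnint
    by_cases hca : lam.f i < mu.f i
    · -- case A: zero block
      have hin : i < n := by
        by_contra h'
        have : mu.f i = 0 := part_zero mu (by omega)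
        omega
      apply det_zero_of_block _ ⟨i, hin⟩
      intro k j hk hj
      simp only [Matrix.of_apply]
      rw [if_neg]
      have h1 : A (k : ℕ) ≤ A i := hAmono hk
      have h2 : B (j : ℕ) ≤ B i := hB hj
      have h3 : A i + B i < 0 := by simp only [hAdef, hBdef]; push_cast; omega
      push_neg
      linarith
    · -- case B
      have hcb : mu.f i < lam.f (i + 1) := hi (by omega)
      have hin : i + 1 < n := by
        by_contra h'
        have : lam.f (i + 1) = 0 := part_zero lam (by omega)
        omega
      exact detB c A B hA hB n i hin
        (by simp only [hAdef, hBdef]; push_cast; omega)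
end

section
/- Let τ > 0 and χ ∈ ℝ, and consider the quadratic equation (1 − 1/z)(1 − e^{−τ} z) = e^{−τ/2−χ}, i.e. e^{−τ} z² − (1 + e^{−τ} − e^{−τ/2−χ}) z + 1 = 0. This equation has a pair of non-real complex-conjugate roots if and only if |e^{τ/2} + e^{−τ/2} − e^{−χ}| < 2; and in that case each root z satisfies |z| = e^{τ/2} and |z − e^{τ}| = e^{3τ/4 − χ/2}, so the two roots are exactly the two intersection points of the circles {|z| = e^{τ/2}} and {|z − e^{τ}| = e^{3τ/4 − χ/2}}. -/
/-!
After clearing the leading coefficient `e^{-τ}`, a non-real root `z` of the real quadratic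
`critPoly τ χ` is pinned down by Vieta's formulas: `|z|² = e^{τ}` and
`2 Re z = e^{τ} + 1 - e^{τ/2-χ}`. The discriminant equals
`e^{-τ} ((e^{τ/2} + e^{-τ/2} - e^{-χ})² - 4)`, which gives the criterion, and on the circle
`|z| = e^{τ/2}` the condition on `Re z` is exactly `|z - e^{τ}|² = e^{3τ/2-χ}`.
-/

/-- The critical-point quadratic `e^{-τ} z² - (1 + e^{-τ} - e^{-τ/2-χ}) z + 1`, i.e.
`(1 - 1/z)(1 - e^{-τ} z) - e^{-τ/2-χ}` multiplied by `z`. -/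
noncomputable def critPoly (τ χ : ℝ) (z : ℂ) : ℂ :=
  (Real.exp (-τ) : ℂ) * z ^ 2 -
    ((1 : ℂ) + (Real.exp (-τ) : ℂ) - (Real.exp (-τ / 2 - χ) : ℂ)) * z + 1

open Complex

section RealQuadratic

variable {a b c : ℝ} {z : ℂ}

lemma quadratic_eq_zero_iff_re_im :
    (a : ℂ) * z ^ 2 - b * z + c = 0 ↔
      a * (z.re ^ 2 - z.im ^ 2) - b * z.re + c = 0 ∧ z.im * (2 * a * z.re - b) = 0 := by
  rw [Complex.ext_iff]
  simp only [sub_re, sub_im, add_re, add_im, mul_re, mul_im, ofReal_re, ofReal_im, sq,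
    zero_re, zero_im]
  constructor <;> rintro ⟨hre, him⟩ <;>
    exact ⟨by linear_combination hre, by linear_combination him⟩

lemma quadratic_eq_zero_iff_of_discrim_neg (hdisc : b ^ 2 < 4 * a * c) :
    (a : ℂ) * z ^ 2 - b * z + c = 0 ↔ a * normSq z = c ∧ 2 * a * z.re = b := by
  rw [quadratic_eq_zero_iff_re_im, normSq_apply]
  constructor
  · rintro ⟨hre, him⟩
    -- at a real root `x` the discriminant would be `(2 a x - b)² ≥ 0`
    have hz : z.im ≠ 0 := fun h0 => by
      rw [h0] at hre
      have : (2 * a * z.re - b) ^ 2 = b ^ 2 - 4 * a * c := by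
        linear_combination 4 * a * hre
      nlinarith [sq_nonneg (2 * a * z.re - b)]
    have hsum : 2 * a * z.re - b = 0 := (mul_eq_zero.mp him).resolve_left hz
    exact ⟨by linear_combination z.re * hsum - hre, by linear_combination hsum⟩
  · rintro ⟨hprod, hsum⟩
    exact ⟨by linear_combination z.re * hsum - hprod, by linear_combination z.im * hsum⟩

lemma exists_im_ne_zero_quadratic_eq_zero_iff (ha : a ≠ 0) :
    (∃ z : ℂ, z.im ≠ 0 ∧ (a : ℂ) * z ^ 2 - b * z + c = 0) ↔ b ^ 2 < 4 * a * c := by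
  constructor
  · rintro ⟨z, hz, h⟩
    rw [quadratic_eq_zero_iff_re_im] at h
    have hsum : 2 * a * z.re - b = 0 := (mul_eq_zero.mp h.2).resolve_left hz
    have : 4 * a * c - b ^ 2 = 4 * (a * z.im) ^ 2 := by
      linear_combination 4 * a * h.1 - (2 * a * z.re - b) * hsum
    have : 0 < (a * z.im) ^ 2 := by positivity
    linarith
  · intro hdisc
    have hpos : 0 < 4 * a * c - b ^ 2 := by linarith
    refine ⟨⟨b / (2 * a), √(4 * a * c - b ^ 2) / (2 * a)⟩, ?_,
      (quadratic_eq_zero_iff_of_discrim_neg hdisc).mpr ⟨?_, ?_⟩⟩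
    · exact div_ne_zero (Real.sqrt_pos.mpr hpos).ne' (mul_ne_zero two_ne_zero ha)
    · rw [normSq_mk, ← sq, ← sq, div_pow, div_pow, Real.sq_sqrt hpos.le]
      field_simp
      ring
    · field_simp

end RealQuadratic

lemma norm_eq_and_norm_sub_ofReal_eq_iff {ρ R : ℝ} (a : ℝ) (hρ : 0 ≤ ρ) (hR : 0 ≤ R) (z : ℂ) :
    ‖z‖ = ρ ∧ ‖z - a‖ = R ↔ normSq z = ρ ^ 2 ∧ 2 * a * z.re = ρ ^ 2 + a ^ 2 - R ^ 2 := by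
  have hsub : normSq (z - a) = normSq z - 2 * a * z.re + a ^ 2 := by
    rw [normSq_sub, normSq_ofReal, conj_ofReal, re_mul_ofReal]
    ring
  rw [← sq_eq_sq₀ (norm_nonneg _) hρ, ← sq_eq_sq₀ (norm_nonneg _) hR, Complex.sq_norm,
    Complex.sq_norm, hsub]
  constructor <;> rintro ⟨hz, hsub⟩ <;> exact ⟨hz, by linarith⟩

open ComplexConjugate

lemma critPoly_eq_quadratic (τ χ : ℝ) (z : ℂ) :
    critPoly τ χ z = (Real.exp (-τ) : ℂ) * z ^ 2 -
      ((1 + Real.exp (-τ) - Real.exp (-τ / 2 - χ) : ℝ) : ℂ) * z + ((1 : ℝ) : ℂ) := by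
  simp only [critPoly, ofReal_add, ofReal_sub, ofReal_one]

lemma critPoly_conj (τ χ : ℝ) (z : ℂ) : critPoly τ χ (conj z) = conj (critPoly τ χ z) := by
  simp only [critPoly, map_add, map_sub, map_mul, map_pow, map_one, conj_ofReal]

lemma critPoly_discrim_neg_iff (τ χ : ℝ) :
    (1 + Real.exp (-τ) - Real.exp (-τ / 2 - χ)) ^ 2 < 4 * Real.exp (-τ) * 1 ↔
      |Real.exp (τ / 2) + Real.exp (-τ / 2) - Real.exp (-χ)| < 2 := by
  set m := Real.exp (-τ / 2)
  have h1 : m * Real.exp (τ / 2) = 1 := by rw [← Real.exp_add]; ring_nf; exact Real.exp_zero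
  have h2 : m * m = Real.exp (-τ) := by rw [← Real.exp_add]; ring_nf
  have h3 : m * Real.exp (-χ) = Real.exp (-τ / 2 - χ) := by rw [← Real.exp_add]; ring_nf
  have hb : 1 + Real.exp (-τ) - Real.exp (-τ / 2 - χ) =
      m * (Real.exp (τ / 2) + Real.exp (-τ / 2) - Real.exp (-χ)) := by
    linear_combination -h1 - h2 + h3
  rw [hb, ← h2, mul_one, mul_pow, ← sq, mul_comm 4, mul_lt_mul_iff_right₀ (by positivity),
    show (4 : ℝ) = 2 ^ 2 by norm_num, sq_lt_sq, abs_two]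

lemma critPoly_eq_zero_iff_of_abs_lt {τ χ : ℝ}
    (h : |Real.exp (τ / 2) + Real.exp (-τ / 2) - Real.exp (-χ)| < 2) (z : ℂ) :
    critPoly τ χ z = 0 ↔
      ‖z‖ = Real.exp (τ / 2) ∧ ‖z - (Real.exp τ : ℂ)‖ = Real.exp (3 * τ / 4 - χ / 2) := by
  rw [critPoly_eq_quadratic, quadratic_eq_zero_iff_of_discrim_neg
      ((critPoly_discrim_neg_iff τ χ).mpr h),
    norm_eq_and_norm_sub_ofReal_eq_iff _ (Real.exp_pos _).le (Real.exp_pos _).le]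
  have hρ : Real.exp (τ / 2) ^ 2 = Real.exp τ := by rw [← Real.exp_nat_mul]; ring_nf
  have hR : Real.exp (3 * τ / 4 - χ / 2) ^ 2 = Real.exp τ ^ 2 * Real.exp (-τ / 2 - χ) := by
    rw [← Real.exp_nat_mul, ← Real.exp_nat_mul, ← Real.exp_add]; ring_nf
  have hm : Real.exp (-τ) * Real.exp τ = 1 := by rw [← Real.exp_add, neg_add_cancel, Real.exp_zero]
  set E := Real.exp τ
  rw [hρ, hR]
  refine and_congr ?_ ?_
  · rw [Real.exp_neg, inv_mul_eq_one₀ (Real.exp_ne_zero _), eq_comm]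
  · rw [show 2 * E * z.re = E ^ 2 * (2 * Real.exp (-τ) * z.re) by
        linear_combination (-2 * E * z.re) * hm,
      show E + E ^ 2 - E ^ 2 * Real.exp (-τ / 2 - χ) =
        E ^ 2 * (1 + Real.exp (-τ) - Real.exp (-τ / 2 - χ)) by linear_combination (-E) * hm,
      mul_right_inj' (by positivity)]

theorem critical_points_of_action_general (τ χ : ℝ) :
    ((∃ z : ℂ, z.im ≠ 0 ∧ critPoly τ χ z = 0 ∧ critPoly τ χ ((starRingEnd ℂ) z) = 0) ↔
      |Real.exp (τ / 2) + Real.exp (-τ / 2) - Real.exp (-χ)| < 2) ∧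
    (|Real.exp (τ / 2) + Real.exp (-τ / 2) - Real.exp (-χ)| < 2 →
      ∀ z : ℂ, critPoly τ χ z = 0 ↔
        (‖z‖ = Real.exp (τ / 2) ∧
          ‖z - (Real.exp τ : ℂ)‖ = Real.exp (3 * τ / 4 - χ / 2))) := by
  refine ⟨?_, critPoly_eq_zero_iff_of_abs_lt⟩
  simp_rw [critPoly_conj, map_eq_zero, and_self, critPoly_eq_quadratic]
  exact (exists_im_ne_zero_quadratic_eq_zero_iff (Real.exp_pos _).ne').trans
    (critPoly_discrim_neg_iff τ χ)

/-- The critical-point equation `(1-1/z)(1-e^{-τ}z) = e^{-τ/2-χ}` has a pair of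
non-real complex-conjugate roots iff `|e^{τ/2} + e^{-τ/2} - e^{-χ}| < 2`; in that case
its roots are exactly the two intersection points of the circles `|z| = e^{τ/2}` and
`|z - e^{τ}| = e^{3τ/4 - χ/2}`. -/
theorem critical_points_of_action (τ χ : ℝ) (hτ : 0 < τ) :
    ((∃ z : ℂ, z.im ≠ 0 ∧ critPoly τ χ z = 0 ∧ critPoly τ χ ((starRingEnd ℂ) z) = 0) ↔
      |Real.exp (τ / 2) + Real.exp (-τ / 2) - Real.exp (-χ)| < 2) ∧
    (|Real.exp (τ / 2) + Real.exp (-τ / 2) - Real.exp (-χ)| < 2 →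
      ∀ z : ℂ, critPoly τ χ z = 0 ↔
        (‖z‖ = Real.exp (τ / 2) ∧
          ‖z - (Real.exp τ : ℂ)‖ = Real.exp (3 * τ / 4 - χ / 2))) :=
  critical_points_of_action_general τ χ
end

section
/- Let z ∈ ℂ with |z| < 1 and let Log denote the principal complex logarithm. Then for every r > 0 the series Σ_{n=0}^{∞} Log(1 − e^{−rn} z) converges absolutely, and lim_{r→0+} r · Σ_{n=0}^{∞} Log(1 − e^{−rn} z) = −L(z), where L(z) = Σ_{k≥1} z^k/k². Equivalently, ln (z;q)_∞ ∼ −dilog(1−z)/r as r → 0+, where q = e^{−r} and (z;q)_∞ = ∏_{n≥0}(1 − qⁿ z). -/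
/-!
Expanding each logarithm in its Taylor series and summing the absolutely convergent double
series first over `n` gives, for `q = e^{-r}`,
`Σₙ Log(1 - qⁿ z) = -Σ_{k ≥ 1} z^k / (k (1 - e^{-rk}))`.
After multiplying by `r`, the `k`-th term carries the factor `r / (1 - e^{-rk})`, which tends
to `1/k` as `r → 0+` and is at most `1/k + r`, so dominated convergence yields `-Σ z^k / k²`.
-/

/-- `L(z) = Σ_{k ≥ 1} z^k/k² = dilog(1-z)`. -/
noncomputable def dilogL (z : ℂ) : ℂ :=
  ∑' k : ℕ, z ^ (k + 1) / ((k : ℂ) + 1) ^ 2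

open Filter Topology

namespace Real

lemma div_one_sub_exp_neg_le {x : ℝ} (hx : 0 < x) : x / (1 - exp (-x)) ≤ 1 + x := by
  have hexp : (1 + x) * exp (-x) ≤ 1 := by
    calc (1 + x) * exp (-x) ≤ exp x * exp (-x) := by gcongr; linarith [add_one_le_exp x]
      _ = 1 := by rw [← exp_add, add_neg_cancel, exp_zero]
  rw [div_le_iff₀ (sub_pos.mpr (exp_lt_one_iff.mpr (neg_lt_zero.mpr hx)))]
  linarith

lemma div_one_sub_exp_neg_mul_le {r m : ℝ} (hr : 0 < r) (hm : 0 < m) :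
    r / (1 - exp (-(r * m))) ≤ m⁻¹ + r := by
  calc r / (1 - exp (-(r * m))) = r * m / (1 - exp (-(r * m))) / m := by
        rw [mul_div_right_comm, mul_div_cancel_right₀ _ hm.ne']
    _ ≤ (1 + r * m) / m := by gcongr; exact div_one_sub_exp_neg_le (mul_pos hr hm)
    _ = m⁻¹ + r := by field_simp

lemma tendsto_div_one_sub_exp_neg_mul {m : ℝ} (hm : m ≠ 0) :
    Tendsto (fun r => r / (1 - exp (-(r * m)))) (𝓝[≠] 0) (𝓝 m⁻¹) := by
  have hderiv : HasDerivAt (fun r => 1 - exp (-(r * m))) m 0 := by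
    simpa using (((hasDerivAt_id (0 : ℝ)).mul_const m).neg.exp).const_sub 1
  simpa [div_eq_inv_mul] using hderiv.tendsto_slope_zero.inv₀ hm

end Real

open Complex

section GeometricLogSeries

variable {q z : ℂ}

lemma summable_norm_log_one_sub_geometric_mul (hq : ‖q‖ < 1) :
    Summable fun n : ℕ => ‖log (1 - q ^ n * z)‖ := by
  have h : Summable fun n : ℕ => -(q ^ n * z) :=
    ((summable_geometric_of_norm_lt_one hq).mul_right z).neg
  simpa [sub_eq_add_neg] using summable_norm_iff.mpr (summable_log_one_add_of_summable h)

lemma norm_pow_mul_le_norm (hq : ‖q‖ ≤ 1) (n : ℕ) : ‖q ^ n * z‖ ≤ ‖z‖ := by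
  rw [norm_mul, norm_pow]
  exact mul_le_of_le_one_left (norm_nonneg z) (pow_le_one₀ (norm_nonneg q) hq)

lemma summable_uncurry_geometric_mul_pow_div (hq : ‖q‖ < 1) (hz : ‖z‖ < 1) :
    Summable (Function.uncurry fun (n k : ℕ) => (q ^ n * z) ^ (k + 1) / (k + 1)) := by
  have hbound : Summable fun p : ℕ × ℕ => ‖q‖ ^ p.1 * ‖z‖ ^ p.2 :=
    (summable_geometric_of_lt_one (norm_nonneg q) hq).mul_of_nonneg
      (summable_geometric_of_lt_one (norm_nonneg z) hz)
      (fun _ => pow_nonneg (norm_nonneg q) _) (fun _ => pow_nonneg (norm_nonneg z) _)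
  refine hbound.of_norm_bounded fun ⟨n, k⟩ => ?_
  have hk : (1 : ℝ) ≤ ‖(k : ℂ) + 1‖ := by norm_cast; simp
  have hqn : ‖q ^ n * z‖ ≤ ‖q‖ ^ n := by
    rw [norm_mul, norm_pow]
    exact mul_le_of_le_one_right (by positivity) hz.le
  have hzn : ‖q ^ n * z‖ ≤ ‖z‖ := norm_pow_mul_le_norm hq.le n
  calc ‖(q ^ n * z) ^ (k + 1) / (k + 1)‖
      ≤ ‖q ^ n * z‖ ^ (k + 1) := by
        rw [norm_div, norm_pow]
        exact div_le_self (by positivity) hk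
    _ = ‖q ^ n * z‖ * ‖q ^ n * z‖ ^ k := pow_succ' _ _
    _ ≤ ‖q‖ ^ n * ‖z‖ ^ k := by gcongr

theorem tsum_log_one_sub_geometric_mul (hq : ‖q‖ < 1) (hz : ‖z‖ < 1) :
    ∑' n : ℕ, log (1 - q ^ n * z) = -∑' k : ℕ, z ^ (k + 1) / ((k + 1) * (1 - q ^ (k + 1))) := by
  have hlog (n : ℕ) : ∑' k : ℕ, (q ^ n * z) ^ (k + 1) / (k + 1) = -log (1 - q ^ n * z) :=
    (hasSum_taylorSeries_neg_log' ((norm_pow_mul_le_norm hq.le n).trans_lt hz)).tsum_eq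
  have hgeom (k : ℕ) :
      ∑' n : ℕ, (q ^ n * z) ^ (k + 1) / (k + 1) = z ^ (k + 1) / ((k + 1) * (1 - q ^ (k + 1))) := by
    have hqk : ‖q ^ (k + 1)‖ < 1 := by
      rw [norm_pow]; exact pow_lt_one₀ (norm_nonneg q) hq k.succ_ne_zero
    rw [← div_div, div_eq_inv_mul _ (1 - _), ← tsum_geometric_of_norm_lt_one hqk, ← tsum_mul_right]
    congr 1; funext n
    rw [mul_pow, ← pow_mul, ← pow_mul, mul_comm n]
    ring
  calc ∑' n : ℕ, log (1 - q ^ n * z)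
      = -∑' (n : ℕ) (k : ℕ), (q ^ n * z) ^ (k + 1) / (k + 1) := by
        simp only [hlog, tsum_neg, neg_neg]
    _ = -∑' (k : ℕ) (n : ℕ), (q ^ n * z) ^ (k + 1) / (k + 1) := by
        rw [(summable_uncurry_geometric_mul_pow_div hq hz).tsum_comm]
    _ = _ := by simp only [hgeom]

end GeometricLogSeries

section Asymptotics

variable {z : ℂ}

lemma ofReal_exp_neg_mul_natCast (r : ℝ) (n : ℕ) :
    (Real.exp (-(r * n)) : ℂ) = (Real.exp (-r) : ℂ) ^ n := by
  rw [← ofReal_pow, ← Real.exp_nat_mul, mul_neg, mul_comm]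

lemma norm_ofReal_exp_neg_lt_one {r : ℝ} (hr : 0 < r) : ‖(Real.exp (-r) : ℂ)‖ < 1 := by
  rw [norm_real, Real.norm_of_nonneg (Real.exp_pos _).le, Real.exp_lt_one_iff]
  linarith

lemma ofReal_mul_tsum_log_one_sub_exp_neg_mul (hz : ‖z‖ < 1) {r : ℝ} (hr : 0 < r) :
    (r : ℂ) * ∑' n : ℕ, log (1 - (Real.exp (-(r * n)) : ℂ) * z) =
      ∑' k : ℕ, -(z ^ (k + 1) / (k + 1)) * (r / (1 - Real.exp (-(r * (k + 1)))) : ℝ) := by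
  have hq := norm_ofReal_exp_neg_lt_one hr
  simp only [ofReal_exp_neg_mul_natCast, tsum_log_one_sub_geometric_mul hq hz, mul_neg,
    ← tsum_mul_left, ← tsum_neg]
  congr 1; funext k
  rw [← ofReal_exp_neg_mul_natCast]
  push_cast
  field_simp

lemma tendsto_tsum_mul_div_one_sub_exp_neg_mul (hz : ‖z‖ < 1) :
    Tendsto (fun r : ℝ =>
        ∑' k : ℕ, -(z ^ (k + 1) / (k + 1)) * (r / (1 - Real.exp (-(r * (k + 1)))) : ℝ))
      (𝓝[>] 0) (𝓝 (-dilogL z)) := by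
  have hlim : -dilogL z = ∑' k : ℕ, -(z ^ (k + 1) / (k + 1)) * (((k + 1 : ℝ))⁻¹ : ℝ) := by
    rw [dilogL, ← tsum_neg]
    congr 1; funext k
    push_cast
    field_simp
  rw [hlim]
  refine tendsto_tsum_of_dominated_convergence (bound := fun k => 2 * ‖z‖ ^ (k + 1)) ?_ ?_ ?_
  · exact ((summable_geometric_of_lt_one (norm_nonneg z) hz).mul_left (2 * ‖z‖)).congr
      fun k => by ring
  · intro k
    exact ((continuous_ofReal.tendsto _).comp
      ((Real.tendsto_div_one_sub_exp_neg_mul (by positivity)).mono_left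
        (nhdsWithin_mono 0 fun _ hx => ne_of_gt hx))).const_mul _
  · filter_upwards [Ioo_mem_nhdsGT (zero_lt_one' ℝ)] with r ⟨hr0, hr1⟩ k
    have hk : (1 : ℝ) ≤ k + 1 := by simp
    have hker_nonneg : 0 ≤ r / (1 - Real.exp (-(r * (k + 1)))) :=
      div_nonneg hr0.le (sub_nonneg.mpr (Real.exp_le_one_iff.mpr (by nlinarith)))
    have hker_le : r / (1 - Real.exp (-(r * (k + 1)))) ≤ 2 :=
      (Real.div_one_sub_exp_neg_mul_le hr0 (by positivity)).trans
        (by linarith [inv_le_one_of_one_le₀ hk])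
    rw [norm_mul, norm_neg, norm_div, norm_pow, norm_real, Real.norm_of_nonneg hker_nonneg]
    have hzk : ‖z‖ ^ (k + 1) / ‖(k : ℂ) + 1‖ ≤ ‖z‖ ^ (k + 1) :=
      div_le_self (by positivity) (by norm_cast; simp)
    calc ‖z‖ ^ (k + 1) / ‖(k : ℂ) + 1‖ * (r / (1 - Real.exp (-(r * (k + 1)))))
        ≤ ‖z‖ ^ (k + 1) * 2 := mul_le_mul hzk hker_le hker_nonneg (by positivity)
      _ = 2 * ‖z‖ ^ (k + 1) := mul_comm _ _

end Asymptotics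

/-- Asymptotics of the quantum dilogarithm: for `|z| < 1` and `q = e^{-r}`, the series
`Σ_{n ≥ 0} Log(1 - qⁿ z) = ln (z;q)_∞` converges absolutely, and
`r · ln (z;q)_∞ → -L(z) = -dilog(1-z)` as `r → 0+`. -/
theorem quantum_dilogarithm_asymptotics (z : ℂ) (hz : ‖z‖ < 1) :
    (∀ r : ℝ, 0 < r →
      Summable fun n : ℕ =>
        ‖Complex.log (1 - (Real.exp (-(r * n)) : ℂ) * z)‖) ∧
    Filter.Tendsto
      (fun r : ℝ =>
        (r : ℂ) * ∑' n : ℕ, Complex.log (1 - (Real.exp (-(r * n)) : ℂ) * z))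
      (nhdsWithin 0 (Set.Ioi 0)) (nhds (-dilogL z)) := by
  refine ⟨fun r hr => ?_, ?_⟩
  · simpa only [ofReal_exp_neg_mul_natCast] using
      summable_norm_log_one_sub_geometric_mul (z := z) (norm_ofReal_exp_neg_lt_one hr)
  · refine (tendsto_tsum_mul_div_one_sub_exp_neg_mul hz).congr' ?_
    filter_upwards [self_mem_nhdsWithin] with r hr
    exact (ofReal_mul_tsum_log_one_sub_exp_neg_mul hz hr).symm
end
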